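/- For all real α > -1/2, the integral I₂(α) = ∫_{-1/2}^{1/2} (φ₊^{(α,1)}(t))² dt equals (1/2)(1 − Γ(2α+2)Γ(α+3/2)² / (Γ(2α+5/2)Γ(α+1)Γ(α+2)√π)), where φ₊^{(α,1)}(t) = 1/2 + 𝒦 ∑_{k=0}^∞ C(α,k)(-1)^k (2t)^{2k+1}/(2k+1) with 𝒦 = Γ(α+3/2)/(√π Γ(α+1)). -/

import Mathlib

/-- Generalized binomial coefficient `C(α,k) = (1/k!)·∏_{r<k}(α-r)`. -/
noncomputable def genBinom (α : ℝ) (k : ℕ) : ℝ :=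
  (∏ r ∈ Finset.range k, (α - r)) / (Nat.factorial k)

/-- The ultraspherical profile function `φ₊^{(α,1)}` given by its power series. -/
noncomputable def phiPlus (α t : ℝ) : ℝ :=
  1/2 + (Real.Gamma (α + 3/2) / (Real.sqrt Real.pi * Real.Gamma (α + 1))) *
    ∑' k : ℕ, genBinom α k * (-1) ^ k * (2 * t) ^ (2 * k + 1) / (2 * k + 1)

/-!
On `(-1/2, 1/2)` the power series is twice the primitive `g t = ∫₀ᵗ (1 - 4u²)^α du`:
integrate the binomial series of `(1 - 4u²)^α` term by term. Hence `φ₊ = 1/2 + 2K g` with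
`K = Γ(α+3/2) / (√π Γ(α+1))`, and since `g` is odd, `∫ φ₊² = 1/4 + 4K² ∫ g²`. Two integrations
by parts, the second one through `t (1 - 4t²)^α = -((1 - 4t²)^(α+1))' / (8(α+1))`, give
`∫ g² = g(1/2)² - (1/(4(α+1))) ∫ (1 - 4t²)^(2α+1)`. Finally the substitution `t = u - 1/2` turns
`∫ (1 - 4t²)^β` into `4^β B(β+1, β+1)`, which the duplication formula evaluates to
`√π Γ(β+1) / (2 Γ(β+3/2))`.
-/

open Real Set MeasureTheory intervalIntegral

open Polynomial in
theorem genBinom_eq_choose (α : ℝ) (k : ℕ) : genBinom α k = Ring.choose α k := by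
  rw [genBinom, Ring.choose_eq_smul, ← aeval_eq_smeval, aeval_def, ← eval_map, descPochhammer_map,
    descPochhammer_eval_eq_prod_range, smul_eq_mul, div_eq_inv_mul]

theorem hasSum_genBinom_mul_pow (α : ℝ) {x : ℝ} (hx : |x| < 1) :
    HasSum (fun k ↦ genBinom α k * x ^ k) ((1 + x) ^ α) := by
  simpa [-FormalMultilinearSeries.apply_eq_prod_smul_coeff, binomialSeries_apply,
    genBinom_eq_choose] using
    one_add_rpow_hasFPowerSeriesOnBall_zero.hasSum (by simpa [Real.enorm_eq_ofReal_abs] using hx)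

theorem summable_abs_genBinom_mul_pow (α : ℝ) {x : ℝ} (hx : |x| < 1) :
    Summable (fun k ↦ |genBinom α k| * |x| ^ k) := by
  simpa [-FormalMultilinearSeries.apply_eq_prod_smul_coeff, binomialSeries_apply,
    genBinom_eq_choose] using
    (binomialSeries ℝ α).summable_norm_apply <|
      Metric.eball_subset_eball binomialSeries_radius_ge_one <| by
        simpa [Real.enorm_eq_ofReal_abs] using hx

theorem integral_neg_self_eq_zero_of_odd {f : ℝ → ℝ} (hf : ∀ x, f (-x) = -f x) (a : ℝ) :
    ∫ x in -a..a, f x = 0 := by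
  have h := integral_comp_neg (a := -a) (b := a) f
  simp only [hf, intervalIntegral.integral_neg, neg_neg] at h
  linarith

theorem ofReal_betaIntegrand {a b x : ℝ} (hx : x ∈ uIcc 0 1) :
    (x : ℂ) ^ ((a : ℂ) - 1) * (1 - (x : ℂ)) ^ ((b : ℂ) - 1) =
      ((x ^ (a - 1) * (1 - x) ^ (b - 1) : ℝ) : ℂ) := by
  rw [uIcc_of_le zero_le_one] at hx
  rw [Complex.ofReal_mul, Complex.ofReal_cpow hx.1, Complex.ofReal_cpow (sub_nonneg.2 hx.2)]
  push_cast
  rfl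

theorem intervalIntegrable_rpow_mul_one_sub_rpow {a b : ℝ} (ha : 0 < a) (hb : 0 < b) :
    IntervalIntegrable (fun x : ℝ ↦ x ^ (a - 1) * (1 - x) ^ (b - 1)) volume 0 1 := by
  refine (Complex.betaIntegral_convergent (u := a) (v := b) (by simpa) (by simpa)).norm.congr ?_
  intro x hx
  have hx' : x ∈ Icc 0 1 := by rw [← uIcc_of_le zero_le_one]; exact uIoc_subset_uIcc hx
  dsimp only
  rw [ofReal_betaIntegrand (uIoc_subset_uIcc hx), Complex.norm_real, Real.norm_eq_abs,
    abs_of_nonneg (mul_nonneg (rpow_nonneg hx'.1 _) (rpow_nonneg (sub_nonneg.2 hx'.2) _))]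

theorem integral_rpow_mul_one_sub_rpow {a b : ℝ} (ha : 0 < a) (hb : 0 < b) :
    ∫ x in (0 : ℝ)..1, x ^ (a - 1) * (1 - x) ^ (b - 1) = Gamma a * Gamma b / Gamma (a + b) := by
  have h := Complex.Gamma_mul_Gamma_eq_betaIntegral (s := a) (t := b) (by simpa) (by simpa)
  rw [Complex.betaIntegral, integral_congr fun x hx ↦ ofReal_betaIntegrand hx, integral_ofReal,
    ← Complex.ofReal_add, Complex.Gamma_ofReal, Complex.Gamma_ofReal, Complex.Gamma_ofReal] at h
  rw [eq_div_iff (Gamma_pos_of_pos (add_pos ha hb)).ne']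
  exact_mod_cast (h.trans (mul_comm _ _)).symm

theorem Gamma_mul_Gamma_div_Gamma_add_self {s : ℝ} (hs : 0 < s) :
    Gamma s * Gamma s / Gamma (s + s) = 2 ^ (1 - 2 * s) * √π * Gamma s / Gamma (s + 1/2) := by
  rw [← two_mul, div_eq_div_iff (Gamma_pos_of_pos (by positivity)).ne'
    (Gamma_pos_of_pos (by positivity)).ne']
  linear_combination Gamma s * Gamma_mul_Gamma_add_half s

theorem four_rpow_mul_two_rpow (α : ℝ) : (4 : ℝ) ^ α * 2 ^ (1 - 2 * (α + 1)) = 1 / 2 := by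
  rw [show (4 : ℝ) = 2 ^ (2 : ℝ) by norm_num, ← rpow_mul zero_le_two, ← rpow_add two_pos,
    show 2 * α + (1 - 2 * (α + 1)) = -1 by ring, rpow_neg_one, one_div]

namespace PhiPlus

noncomputable def weight (α t : ℝ) : ℝ := (1 - 4 * t ^ 2) ^ α

noncomputable def primitive (α t : ℝ) : ℝ := ∫ u in 0..t, weight α u

theorem weight_neg (α t : ℝ) : weight α (-t) = weight α t := by rw [weight, weight, neg_sq]

theorem one_sub_four_mul_sq_pos {t : ℝ} (ht : t ∈ Ioo (-(1/2)) (1/2)) : 0 < 1 - 4 * t ^ 2 := by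
  nlinarith [ht.1, ht.2]

theorem continuous_weight {α : ℝ} (hα : 0 ≤ α) : Continuous (weight α) :=
  (by fun_prop : Continuous fun t : ℝ ↦ 1 - 4 * t ^ 2).rpow_const fun _ ↦ Or.inr hα

theorem continuousAt_weight (α : ℝ) {t : ℝ} (ht : t ∈ Ioo (-(1/2)) (1/2)) :
    ContinuousAt (weight α) t :=
  (by fun_prop : Continuous fun t : ℝ ↦ 1 - 4 * t ^ 2).continuousAt.rpow_const
    (Or.inl (one_sub_four_mul_sq_pos ht).ne')

theorem weight_mul_weight (α β : ℝ) {t : ℝ} (ht : t ∈ Ioo (-(1/2)) (1/2)) :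
    weight α t * weight β t = weight (α + β) t :=
  (rpow_add (one_sub_four_mul_sq_pos ht) α β).symm

theorem weight_half {α : ℝ} (hα : α ≠ 0) : weight α (1/2) = 0 := by
  norm_num [weight, zero_rpow hα]

theorem hasDerivAt_weight_add_one (α : ℝ) {t : ℝ} (ht : t ∈ Ioo (-(1/2)) (1/2)) :
    HasDerivAt (weight (α + 1)) (-(8 * (α + 1)) * (t * weight α t)) t := by
  have h := ((hasDerivAt_pow 2 t).const_mul 4).const_sub 1 |>.rpow_const
    (p := α + 1) (Or.inl (one_sub_four_mul_sq_pos ht).ne')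
  convert h using 1
  · rfl
  · rw [weight, add_sub_cancel_right]
    norm_num
    ring

theorem weight_eq_of_mem_Icc (α : ℝ) {t : ℝ} (ht : t ∈ Icc (-(1/2)) (1/2)) :
    weight α t = 4 ^ α * ((t + 1/2) ^ α * (1 - (t + 1/2)) ^ α) := by
  have h₁ : 0 ≤ t + 1/2 := by linarith [ht.1]
  have h₂ : 0 ≤ 1 - (t + 1/2) := by linarith [ht.2]
  rw [weight, ← mul_rpow h₁ h₂, ← mul_rpow zero_le_four (mul_nonneg h₁ h₂)]
  ring_nf

theorem intervalIntegrable_weight {α : ℝ} (hα : -1 < α) :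
    IntervalIntegrable (weight α) volume (-(1/2)) (1/2) := by
  have hα₁ : 0 < α + 1 := by linarith
  have h := ((intervalIntegrable_rpow_mul_one_sub_rpow hα₁ hα₁).const_mul (4 ^ α)).comp_add_right
    (1/2)
  rw [zero_sub, show (1 : ℝ) - 1/2 = 1/2 by norm_num] at h
  simp only [add_sub_cancel_right] at h
  exact h.congr fun t ht ↦ (weight_eq_of_mem_Icc α <| by
    rw [← uIcc_of_le (by norm_num)]; exact uIoc_subset_uIcc ht).symm

theorem zero_mem_uIcc_half : (0 : ℝ) ∈ uIcc (-(1/2)) (1/2) := by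
  rw [uIcc_of_le (by norm_num)]; norm_num

theorem intervalIntegrable_weight_of_mem {α : ℝ} (hα : -1 < α) {a b : ℝ}
    (ha : a ∈ uIcc (-(1/2)) (1/2)) (hb : b ∈ uIcc (-(1/2)) (1/2)) :
    IntervalIntegrable (weight α) volume a b :=
  (intervalIntegrable_weight hα).mono_set (uIcc_subset_uIcc ha hb)

theorem integral_weight {α : ℝ} (hα : -1 < α) :
    ∫ t in -(1/2)..1/2, weight α t = √π * Gamma (α + 1) / (2 * Gamma (α + 3/2)) := by
  have hα₁ : 0 < α + 1 := by linarith
  rw [integral_congr fun t ht ↦ weight_eq_of_mem_Icc α (by rwa [uIcc_of_le (by norm_num)] at ht),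
    integral_comp_add_right (fun x ↦ 4 ^ α * (x ^ α * (1 - x) ^ α)), neg_add_cancel, add_halves,
    intervalIntegral.integral_const_mul]
  have := integral_rpow_mul_one_sub_rpow hα₁ hα₁
  simp only [add_sub_cancel_right] at this
  rw [this, Gamma_mul_Gamma_div_Gamma_add_self hα₁, show α + 1 + 1/2 = α + 3/2 by ring]
  calc 4 ^ α * (2 ^ (1 - 2 * (α + 1)) * √π * Gamma (α + 1) / Gamma (α + 3/2))
      = (4 ^ α * 2 ^ (1 - 2 * (α + 1))) * (√π * Gamma (α + 1) / Gamma (α + 3/2)) := by ring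
    _ = √π * Gamma (α + 1) / (2 * Gamma (α + 3/2)) := by
      rw [four_rpow_mul_two_rpow]; ring

theorem abs_two_mul_sq_lt_one {t : ℝ} (ht : |t| < 1/2) : |(2 * t) ^ 2| < 1 := by
  rw [abs_pow, abs_mul, abs_two]
  nlinarith [abs_nonneg t]

theorem hasSum_weight (α : ℝ) {t : ℝ} (ht : |t| < 1/2) :
    HasSum (fun k : ℕ ↦ genBinom α k * (-1) ^ k * (2 * t) ^ (2 * k)) (weight α t) := by
  have hx : |-(2 * t) ^ 2| < 1 := by rw [abs_neg]; exact abs_two_mul_sq_lt_one ht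
  convert hasSum_genBinom_mul_pow α hx using 1
  · ext k; rw [neg_pow (_ ^ 2), ← pow_mul]; ring
  · rw [weight]; ring_nf

theorem integral_two_mul_pow (t : ℝ) (n : ℕ) :
    ∫ u in 0..t, (2 * u) ^ n = (2 * t) ^ (n + 1) / (2 * (n + 1)) := by
  rw [integral_comp_mul_left (fun x ↦ x ^ n) two_ne_zero, integral_pow, smul_eq_mul]
  field_simp
  ring

theorem hasSum_two_mul_primitive (α : ℝ) {t : ℝ} (ht : |t| < 1/2) :
    HasSum (fun k : ℕ ↦ genBinom α k * (-1) ^ k * (2 * t) ^ (2 * k + 1) / (2 * k + 1))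
      (2 * primitive α t) := by
  have habs : ∀ u ∈ uIoc 0 t, |u| ≤ |t| := fun u hu ↦ by
    simpa using abs_sub_left_of_mem_uIcc (uIoc_subset_uIcc hu)
  have hsum := hasSum_integral_of_dominated_convergence
    (μ := volume) (F := fun k u ↦ genBinom α k * (-1) ^ k * (2 * u) ^ (2 * k)) (f := weight α)
    (fun k _ ↦ |genBinom α k| * |(2 * t) ^ 2| ^ k)
    (fun k ↦ (by fun_prop : Continuous _).aestronglyMeasurable)
    (fun k ↦ ae_of_all _ fun u hu ↦ ?_)
    (ae_of_all _ fun _ _ ↦ summable_abs_genBinom_mul_pow α (abs_two_mul_sq_lt_one ht))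
    intervalIntegrable_const
    (ae_of_all _ fun u hu ↦ hasSum_weight α ((habs u hu).trans_lt ht))
  · have hterm (k : ℕ) : 2 * ∫ u in 0..t, genBinom α k * (-1) ^ k * (2 * u) ^ (2 * k) =
        genBinom α k * (-1) ^ k * (2 * t) ^ (2 * k + 1) / (2 * k + 1) := by
      rw [intervalIntegral.integral_const_mul, integral_two_mul_pow]
      push_cast
      field_simp
    simpa only [hterm, primitive] using hsum.mul_left 2
  · have hut := habs u hu
    rw [norm_mul, norm_mul, norm_pow, norm_neg, norm_one, one_pow, mul_one, Real.norm_eq_abs,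
      Real.norm_eq_abs, pow_mul, abs_pow]
    have hsq : |(2 * u) ^ 2| ≤ |(2 * t) ^ 2| := by
      simp only [abs_pow, abs_mul, abs_two]
      gcongr
    gcongr

theorem phiPlus_eq_of_abs_lt (α : ℝ) {t : ℝ} (ht : |t| < 1/2) :
    phiPlus α t =
      1/2 + 2 * (Gamma (α + 3/2) / (√π * Gamma (α + 1))) * primitive α t := by
  rw [phiPlus, (hasSum_two_mul_primitive α ht).tsum_eq]
  ring

theorem primitive_neg (α t : ℝ) : primitive α (-t) = -primitive α t := by
  have h := integral_comp_neg (a := 0) (b := t) (weight α)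
  simp only [weight_neg, neg_zero] at h
  rw [primitive, primitive, integral_symm, h]

theorem continuousOn_primitive {α : ℝ} (hα : -1 < α) :
    ContinuousOn (primitive α) (uIcc (-(1/2)) (1/2)) :=
  continuousOn_primitive_interval' (intervalIntegrable_weight hα) zero_mem_uIcc_half

theorem hasDerivAt_primitive {α : ℝ} (hα : -1 < α) {t : ℝ} (ht : t ∈ Ioo (-(1/2)) (1/2)) :
    HasDerivAt (primitive α) (weight α t) t := by
  have ht' : t ∈ uIcc (-(1/2)) (1/2) := by
    rw [uIcc_of_le (by norm_num)]; exact Ioo_subset_Icc_self ht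
  exact integral_hasDerivAt_right (intervalIntegrable_weight_of_mem hα zero_mem_uIcc_half ht')
    (ContinuousAt.stronglyMeasurableAtFilter isOpen_Ioo (fun _ hx ↦ continuousAt_weight α hx) t ht)
    (continuousAt_weight α ht)

theorem integral_primitive (α : ℝ) : ∫ t in -(1/2)..1/2, primitive α t = 0 :=
  integral_neg_self_eq_zero_of_odd (primitive_neg α) _

theorem primitive_half {α : ℝ} (hα : -1 < α) :
    primitive α (1/2) = √π * Gamma (α + 1) / (4 * Gamma (α + 3/2)) := by
  have h := integral_interval_sub_left (a := 0) (b := 1/2) (c := -(1/2))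
    (intervalIntegrable_weight_of_mem hα zero_mem_uIcc_half right_mem_uIcc)
    (intervalIntegrable_weight_of_mem hα zero_mem_uIcc_half left_mem_uIcc)
  rw [integral_weight hα] at h
  change primitive α (1/2) - primitive α (-(1/2)) = _ at h
  rw [primitive_neg, sub_neg_eq_add, ← two_mul] at h
  rw [show 4 * Gamma (α + 3/2) = 2 * Gamma (α + 3/2) * 2 by ring, ← div_div, ← h]
  ring

theorem integral_sq_half_add_mul_primitive {α : ℝ} (hα : -1 < α) (c : ℝ) :
    ∫ t in -(1/2)..1/2, (1/2 + c * primitive α t) ^ 2 =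
      1/4 + c ^ 2 * ∫ t in -(1/2)..1/2, primitive α t ^ 2 := by
  have hp := (continuousOn_primitive hα).intervalIntegrable (μ := volume)
  have hp2 : IntervalIntegrable (fun t ↦ primitive α t ^ 2) volume (-(1/2)) (1/2) :=
    ((continuousOn_primitive hα).pow 2).intervalIntegrable
  calc ∫ t in -(1/2)..1/2, (1/2 + c * primitive α t) ^ 2
      = ∫ t in -(1/2)..1/2, (1/4 + (c * primitive α t + c ^ 2 * primitive α t ^ 2)) :=
        integral_congr fun t _ ↦ by ring
    _ = 1/4 + c ^ 2 * ∫ t in -(1/2)..1/2, primitive α t ^ 2 := by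
        rw [integral_add intervalIntegrable_const ((hp.const_mul c).add (hp2.const_mul _)),
          integral_add (hp.const_mul c) (hp2.const_mul _), intervalIntegral.integral_const_mul,
          intervalIntegral.integral_const_mul, integral_primitive, intervalIntegral.integral_const]
        norm_num

theorem integral_primitive_sq {α : ℝ} (hα : -1 < α) :
    ∫ t in -(1/2)..1/2, primitive α t ^ 2 =
      primitive α (1/2) ^ 2 - 2 * ∫ t in -(1/2)..1/2, primitive α t * (t * weight α t) := by
  have h := integral_mul_deriv_eq_deriv_mul_of_hasDerivAt (a := -(1/2)) (b := 1/2)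
    (u := fun t ↦ primitive α t ^ 2) (u' := fun t ↦ 2 * primitive α t * weight α t)
    (v := fun t ↦ t) (v' := fun _ ↦ 1) ((continuousOn_primitive hα).pow 2) continuousOn_id
    (fun t ht ↦ ?_) (fun t _ ↦ hasDerivAt_id' t)
    ((intervalIntegrable_weight hα).continuousOn_mul
      (continuousOn_const.mul (continuousOn_primitive hα)))
    intervalIntegrable_const
  · have hswap : ∫ t in -(1/2)..1/2, 2 * primitive α t * weight α t * t =
        2 * ∫ t in -(1/2)..1/2, primitive α t * (t * weight α t) := by
      rw [← intervalIntegral.integral_const_mul]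
      exact integral_congr fun t _ ↦ by ring
    simp only [mul_one] at h
    rw [h, hswap, primitive_neg]
    ring
  · rw [min_eq_left (by norm_num), max_eq_right (by norm_num)] at ht
    convert (hasDerivAt_primitive hα ht).pow 2 using 1
    · ext; simp
    · norm_num

theorem integral_primitive_mul_mul_weight {α : ℝ} (hα : -1 < α) :
    ∫ t in -(1/2)..1/2, primitive α t * (t * weight α t) =
      ∫ t in -(1/2)..1/2, weight (2 * α + 1) t / (8 * (α + 1)) := by
  have hα₁ : 0 < α + 1 := by linarith
  have h := integral_mul_deriv_eq_deriv_mul_of_hasDerivAt (a := -(1/2)) (b := 1/2)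
    (u := primitive α) (u' := weight α) (v := fun t ↦ -weight (α + 1) t / (8 * (α + 1)))
    (v' := fun t ↦ t * weight α t) (continuousOn_primitive hα)
    ((continuous_weight hα₁.le).neg.div_const _).continuousOn
    (fun t ht ↦ ?_) (fun t ht ↦ ?_) (intervalIntegrable_weight hα)
    ((intervalIntegrable_weight hα).continuousOn_mul continuousOn_id)
  · rw [h, weight_neg, weight_half hα₁.ne', integral_congr_Ioo_of_le (by norm_num)
      (g := fun t ↦ -(weight (2 * α + 1) t / (8 * (α + 1)))) fun t ht ↦ ?_,
      intervalIntegral.integral_neg]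
    · ring
    · dsimp only
      rw [← show α + (α + 1) = 2 * α + 1 by ring, ← weight_mul_weight α (α + 1) ht]
      ring
  · rw [min_eq_left (by norm_num), max_eq_right (by norm_num)] at ht
    exact hasDerivAt_primitive hα ht
  · rw [min_eq_left (by norm_num), max_eq_right (by norm_num)] at ht
    convert ((hasDerivAt_weight_add_one α ht).neg.div_const (8 * (α + 1))) using 1
    · ext; simp [neg_div]
    · field_simp

end PhiPlus

open PhiPlus in
theorem stmt11 (α : ℝ) (hα : α > -1/2) :
    (∫ t in (-(1:ℝ)/2)..(1/2), (phiPlus α t) ^ 2) =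
      (1/2) * (1 - Real.Gamma (2 * α + 2) * Real.Gamma (α + 3/2) ^ 2 /
        (Real.Gamma (2 * α + 5/2) * Real.Gamma (α + 1) * Real.Gamma (α + 2) *
          Real.sqrt Real.pi)) := by
  have hα₁ : -1 < α := by linarith
  rw [neg_div, integral_congr_Ioo_of_le (by norm_num)
      fun t ht ↦ by rw [phiPlus_eq_of_abs_lt α (abs_lt.2 ht)],
    integral_sq_half_add_mul_primitive hα₁, integral_primitive_sq hα₁,
    integral_primitive_mul_mul_weight hα₁, intervalIntegral.integral_div,
    integral_weight (by linarith : -1 < 2 * α + 1), primitive_half hα₁,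
    show 2 * α + 1 + 1 = 2 * α + 2 by ring, show 2 * α + 1 + 3/2 = 2 * α + 5/2 by ring,
    show α + 2 = α + 1 + 1 by ring, Gamma_add_one (by linarith : α + 1 ≠ 0)]
  have := (Gamma_pos_of_pos (by linarith : 0 < α + 1)).ne'
  have := (Gamma_pos_of_pos (by linarith : 0 < α + 3/2)).ne'
  have := (Gamma_pos_of_pos (by linarith : 0 < 2 * α + 5/2)).ne'
  have := (sqrt_pos.2 pi_pos).ne'
  have : α + 1 ≠ 0 := by linarith
  generalize Gamma (α + 3/2) = B at *
  field_simp
  ring
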